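/- arXiv:1703.06362 — 5 statements merged into one kernel-verified Lean document; each statement's English description precedes it below -/
import Mathlib

section
/- Let σ = ∫₀^{π/2} dα/√(1 + sin²α) and I = ∫₀^{π/2} sin⁴α/√(1 + sin²α) dα. Then I = σ/3. -/
/-! `t ↦ sin t cos t √(1 + sin² t)` is an antiderivative of `(1 - 3 sin⁴ t) / √(1 + sin² t)` and
vanishes at both `0` and `π/2`, so `∫₀^{π/2} (1 - 3 sin⁴) / √(1 + sin²) = 0`. -/

open Real intervalIntegral

lemma Continuous.div_sqrt_one_add_sin_sq {f : ℝ → ℝ} (hf : Continuous f) :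
    Continuous fun t => f t / √(1 + sin t ^ 2) :=
  hf.div (continuous_const.add (continuous_sin.fun_pow 2)).sqrt
    fun _ => by positivity

lemma hasDerivAt_sqrt_one_add_sin_sq (x : ℝ) :
    HasDerivAt (fun t => √(1 + sin t ^ 2)) (sin x * cos x / √(1 + sin x ^ 2)) x := by
  convert (((hasDerivAt_sin x).fun_pow 2).const_add 1).sqrt (by positivity) using 1
  field_simp
  ring

lemma hasDerivAt_sin_mul_cos_mul_sqrt_one_add_sin_sq (x : ℝ) :
    HasDerivAt (fun t => sin t * cos t * √(1 + sin t ^ 2))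
      ((1 - 3 * sin x ^ 4) / √(1 + sin x ^ 2)) x := by
  refine (((hasDerivAt_sin x).mul (hasDerivAt_cos x)).mul
    (hasDerivAt_sqrt_one_add_sin_sq x)).congr_deriv ?_
  have hsq : √(1 + sin x ^ 2) ^ 2 = 1 + sin x ^ 2 := sq_sqrt (by positivity)
  simp only [Pi.mul_apply]
  field_simp
  linear_combination (cos x ^ 2 - sin x ^ 2) * hsq + (1 + 2 * sin x ^ 2) * cos_sq' x

lemma integral_one_sub_three_mul_sin_pow_four_div_sqrt :
    ∫ α in (0:ℝ)..π / 2, (1 - 3 * sin α ^ 4) / √(1 + sin α ^ 2) = 0 := by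
  have hcont : Continuous fun α => (1 - 3 * sin α ^ 4) / √(1 + sin α ^ 2) :=
    (continuous_const.sub (continuous_const.mul (continuous_sin.fun_pow 4))).div_sqrt_one_add_sin_sq
  rw [integral_eq_sub_of_hasDerivAt (fun x _ => hasDerivAt_sin_mul_cos_mul_sqrt_one_add_sin_sq x)
    (hcont.intervalIntegrable _ _)]
  simp

theorem sin_pow_four_integral :
    (∫ α in (0:ℝ)..(Real.pi / 2), (Real.sin α)^4 / Real.sqrt (1 + (Real.sin α)^2)) =
    (∫ α in (0:ℝ)..(Real.pi / 2), 1 / Real.sqrt (1 + (Real.sin α)^2)) / 3 := by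
  have h := integral_one_sub_three_mul_sin_pow_four_div_sqrt
  simp only [sub_div, mul_div_assoc] at h
  rw [integral_sub (continuous_const.div_sqrt_one_add_sin_sq.intervalIntegrable _ _)
    ((continuous_sin.fun_pow 4).div_sqrt_one_add_sin_sq.intervalIntegrable _ _ |>.const_mul 3),
    integral_const_mul] at h
  linarith
end

section
/- For every δ > 0, the quantity g(δ) := 64 · (∫₀^{π/2} sin⁴α/√(2/δ² + 1 + sin²α) dα) · (∫₀^{π/2} dα/√(2/δ² + 1 + sin²α))³ satisfies 0 < g(δ) < (64/3)·σ⁴, where σ = ∫₀^{π/2} dα/√(1 + sin²α). -/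
/-!
Put `a = 1 + 2 / δ ^ 2 > 1`. Both integrals decrease strictly as `a` grows, so `g(δ)` is below
`64 · I · σ³`, where `I = ∫₀^{π/2} sin⁴ α / √(1 + sin² α) dα` is the value of the first integral at
`a = 1`. Finally `I = σ / 3`: differentiating `sin α cos α √(1 + sin² α)`, which vanishes at both
ends of `[0, π/2]`, gives `(1 - 3 sin⁴ α) / √(1 + sin² α)`.
-/

open Real Set intervalIntegral

section SinSqWeight

variable {a b : ℝ} {f : ℝ → ℝ}

lemma sqrt_add_sin_sq_pos (ha : 0 < a) (x : ℝ) : 0 < √(a + sin x ^ 2) :=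
  sqrt_pos.2 (by positivity)

lemma continuous_div_sqrt_add_sin_sq (hf : Continuous f) (ha : 0 < a) :
    Continuous fun x => f x / √(a + sin x ^ 2) :=
  hf.div (by fun_prop) fun x => (sqrt_add_sin_sq_pos ha x).ne'

lemma integral_div_sqrt_add_sin_sq_pos (hf : Continuous f)
    (hpos : ∀ x ∈ Ioo 0 (π / 2), 0 < f x) (ha : 0 < a) :
    0 < ∫ x in 0..π / 2, f x / √(a + sin x ^ 2) :=
  intervalIntegral_pos_of_pos_on ((continuous_div_sqrt_add_sin_sq hf ha).intervalIntegrable _ _)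
    (fun x hx => div_pos (hpos x hx) (sqrt_add_sin_sq_pos ha x)) (by positivity)

lemma integral_div_sqrt_add_sin_sq_lt (hf : Continuous f)
    (hpos : ∀ x ∈ Ioo 0 (π / 2), 0 < f x) (ha : 0 < a) (hab : a < b) :
    ∫ x in 0..π / 2, f x / √(b + sin x ^ 2) < ∫ x in 0..π / 2, f x / √(a + sin x ^ 2) := by
  have hfa := continuous_div_sqrt_add_sin_sq hf ha
  have hfb := continuous_div_sqrt_add_sin_sq hf (ha.trans hab)
  rw [← sub_pos, ← integral_sub (hfa.intervalIntegrable _ _) (hfb.intervalIntegrable _ _)]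
  refine intervalIntegral_pos_of_pos_on ((hfa.sub hfb).intervalIntegrable _ _)
    (fun x hx => sub_pos.2 ?_) (by positivity)
  gcongr
  exact hpos x hx

lemma hasDerivAt_sin_mul_cos_mul_sqrt_add_sin_sq (ha : 0 < a) (t : ℝ) :
    HasDerivAt (fun t => sin t * cos t * √(a + sin t ^ 2))
      ((a + 2 * (1 - a) * sin t ^ 2 - 3 * sin t ^ 4) / √(a + sin t ^ 2)) t := by
  have hpos := sqrt_add_sin_sq_pos ha t
  have hsqrt : HasDerivAt (fun t => √(a + sin t ^ 2))
      (2 * sin t * cos t / (2 * √(a + sin t ^ 2))) t := by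
    convert ((hasDerivAt_sin t).fun_pow 2).const_add a |>.sqrt (by positivity) using 1
    ring
  refine (((hasDerivAt_sin t).fun_mul (hasDerivAt_cos t)).fun_mul hsqrt).congr_deriv ?_
  field_simp
  rw [sq_sqrt (by positivity)]
  linear_combination (a + 2 * sin t ^ 2) * sin_sq_add_cos_sq t

end SinSqWeight

lemma integral_sin_pow_four_div_sqrt_one_add_sin_sq :
    ∫ x in 0..π / 2, sin x ^ 4 / √(1 + sin x ^ 2) =
      (1 / 3) * ∫ x in 0..π / 2, 1 / √(1 + sin x ^ 2) := by
  have hint (f : ℝ → ℝ) (hf : Continuous f) :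
      IntervalIntegrable (fun x => f x / √(1 + sin x ^ 2)) MeasureTheory.volume 0 (π / 2) :=
    (continuous_div_sqrt_add_sin_sq hf one_pos).intervalIntegrable 0 (π / 2)
  have hzero : ∫ x in 0..π / 2, (1 + 2 * (1 - 1) * sin x ^ 2 - 3 * sin x ^ 4) / √(1 + sin x ^ 2)
      = 0 := by
    rw [integral_eq_sub_of_hasDerivAt (fun t _ => hasDerivAt_sin_mul_cos_mul_sqrt_add_sin_sq
      one_pos t) (hint _ (by fun_prop))]
    simp
  rw [integral_congr (g := fun x => 1 / √(1 + sin x ^ 2) - 3 * (sin x ^ 4 / √(1 + sin x ^ 2)))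
    (fun x _ => by ring), integral_sub (hint _ continuous_const)
    ((hint _ (by fun_prop)).const_mul 3), integral_const_mul] at hzero
  linarith

theorem g_bound (δ : ℝ) (hδ : 0 < δ) :
    0 < 64 * (∫ α in (0:ℝ)..(Real.pi / 2),
        (Real.sin α)^4 / Real.sqrt (2 / δ^2 + 1 + (Real.sin α)^2)) *
      (∫ α in (0:ℝ)..(Real.pi / 2),
        1 / Real.sqrt (2 / δ^2 + 1 + (Real.sin α)^2))^3 ∧
    64 * (∫ α in (0:ℝ)..(Real.pi / 2),
        (Real.sin α)^4 / Real.sqrt (2 / δ^2 + 1 + (Real.sin α)^2)) *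
      (∫ α in (0:ℝ)..(Real.pi / 2),
        1 / Real.sqrt (2 / δ^2 + 1 + (Real.sin α)^2))^3 <
    64 / 3 * (∫ α in (0:ℝ)..(Real.pi / 2), 1 / Real.sqrt (1 + (Real.sin α)^2))^4 := by
  have ha : 1 < 2 / δ ^ 2 + 1 := by linarith [show 0 < 2 / δ ^ 2 by positivity]
  have hsin4 : ∀ x ∈ Ioo 0 (π / 2), 0 < sin x ^ 4 := fun x hx =>
    pow_pos (sin_pos_of_pos_of_lt_pi hx.1 (hx.2.trans (by linarith [pi_pos]))) 4
  have hone : ∀ x ∈ Ioo 0 (π / 2), (0 : ℝ) < 1 := fun _ _ => one_pos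
  have hsin4_cont : Continuous fun x => sin x ^ 4 := by fun_prop
  have hA := integral_div_sqrt_add_sin_sq_pos hsin4_cont hsin4 (one_pos.trans ha)
  have hB := integral_div_sqrt_add_sin_sq_pos continuous_const hone (one_pos.trans ha)
  have hAI := integral_div_sqrt_add_sin_sq_lt hsin4_cont hsin4 one_pos ha
  have hBS := integral_div_sqrt_add_sin_sq_lt continuous_const hone one_pos ha
  rw [integral_sin_pow_four_div_sqrt_one_add_sin_sq] at hAI
  refine ⟨by positivity, ?_⟩
  calc _ < 64 * ((1 / 3) * ∫ x in 0..π / 2, 1 / √(1 + sin x ^ 2)) *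
        (∫ x in 0..π / 2, 1 / √(1 + sin x ^ 2)) ^ 3 := by gcongr
    _ = _ := by ring
end

section
/- Let k = δ/√(2(1+δ²)) and let y(t) = δ·cn(t√(1+δ²), k) be the Duffing solution. Then ξ(t) = sn(t√(1+δ²), k) satisfies the Hill equation ξ'' + (1 + δ²/2 + y(t)²)·ξ = 0. -/
/-! Differentiating `sn` twice gives `sn'' = -sn (dn² + k² cn²) = -sn (1 - k² + 2k² cn²)`, using the
relation between `dn` and `cn`. Rescaling time by `a = √(1 + δ²)` multiplies this by `a²`, and the
choice of modulus makes `a²(1 - k²) = 1 + δ²/2` and `2a²k² = δ²`, which is exactly the Hill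
coefficient `1 + δ²/2 + (δ cn)²`. -/

theorem deriv_deriv_comp_mul_const {𝕜 E : Type*} [NontriviallyNormedField 𝕜]
    [NormedAddCommGroup E] [NormedSpace 𝕜 E] (f : 𝕜 → E) (a t : 𝕜) :
    deriv (deriv fun s => f (s * a)) t = a ^ 2 • deriv (deriv f) (t * a) := by
  have hderiv : deriv (fun s => f (s * a)) = fun s => a • deriv f (a * s) := by
    funext s
    simpa only [mul_comm] using deriv_comp_mul_left a f s
  rw [hderiv, deriv_fun_const_smul_field, deriv_comp_mul_left, smul_smul, mul_comm t, sq]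

theorem deriv_deriv_jacobi_sn {s c d : ℝ → ℝ} {k u : ℝ}
    (hs : ∀ v, HasDerivAt s (c v * d v) v) (hc : HasDerivAt c (-(s u * d u)) u)
    (hd : HasDerivAt d (-(k ^ 2 * c u * s u)) u) :
    deriv (deriv s) u = -(s u * (d u ^ 2 + k ^ 2 * c u ^ 2)) := by
  have hderiv : deriv s = c * d := funext fun v => (hs v).deriv
  rw [hderiv, (hc.mul hd).deriv]
  ring

theorem jacobi_sn_solves_hill_general (δ : ℝ) (sn cn dn : ℝ → ℝ → ℝ)
    (k : ℝ) (hk : k = δ / Real.sqrt (2 * (1 + δ^2)))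
    (hsn : ∀ u, HasDerivAt (fun v => sn v k) (cn u k * dn u k) u)
    (hcn : ∀ u, HasDerivAt (fun v => cn v k) (-(sn u k * dn u k)) u)
    (hdn : ∀ u, HasDerivAt (fun v => dn v k) (-(k^2 * cn u k * sn u k)) u)
    (hdn2 : ∀ u, (dn u k)^2 - k^2 * (cn u k)^2 = 1 - k^2) :
    ∀ t : ℝ,
      deriv (deriv (fun s => sn (s * Real.sqrt (1 + δ^2)) k)) t
        + (1 + δ^2 / 2 + (δ * cn (t * Real.sqrt (1 + δ^2)) k)^2)
          * sn (t * Real.sqrt (1 + δ^2)) k = 0 := by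
  intro t
  set a := Real.sqrt (1 + δ ^ 2)
  have ha : a ^ 2 = 1 + δ ^ 2 := Real.sq_sqrt (by positivity)
  have hak : 2 * a ^ 2 * k ^ 2 = δ ^ 2 := by
    rw [ha, hk, div_pow, Real.sq_sqrt (by positivity)]
    field_simp
  rw [deriv_deriv_comp_mul_const (fun v => sn v k), smul_eq_mul,
    deriv_deriv_jacobi_sn hsn (hcn _) (hdn _)]
  linear_combination (-a ^ 2 * sn (t * a) k) * hdn2 (t * a)
    + (-sn (t * a) k) * ha + (sn (t * a) k * (1 / 2 - cn (t * a) k ^ 2)) * hak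

theorem jacobi_sn_solves_hill (δ : ℝ) (sn cn dn : ℝ → ℝ → ℝ)
    (k : ℝ) (hk : k = δ / Real.sqrt (2 * (1 + δ^2)))
    (hsn : ∀ u, HasDerivAt (fun v => sn v k) (cn u k * dn u k) u)
    (hcn : ∀ u, HasDerivAt (fun v => cn v k) (-(sn u k * dn u k)) u)
    (hdn : ∀ u, HasDerivAt (fun v => dn v k) (-(k^2 * cn u k * sn u k)) u)
    (hpyth : ∀ u, (sn u k)^2 + (cn u k)^2 = 1)
    (hdn2 : ∀ u, (dn u k)^2 - k^2 * (cn u k)^2 = 1 - k^2) :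
    ∀ t : ℝ,
      deriv (deriv (fun s => sn (s * Real.sqrt (1 + δ^2)) k)) t
        + (1 + δ^2 / 2 + (δ * cn (t * Real.sqrt (1 + δ^2)) k)^2)
          * sn (t * Real.sqrt (1 + δ^2)) k = 0 :=
  jacobi_sn_solves_hill_general δ sn cn dn k hk hsn hcn hdn hdn2
end

section
/- Let y be the Duffing solution with y(0) = −δ < 0, y'(0) = 0 and period T = T(δ), and let γ > 0. Then ∫₀^{T/2} √(γ + y(t)²) dt = 2√2 · ∫₀^{π/2} √((γ + δ²sin²θ)/(2 + δ² + δ²sin²θ)) dθ. -/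
/-!
The energy identity `y'² = (2 + δ² + y²)(δ² − y²)/2` shows that `y` rises monotonically from `−δ`
to `δ` on a first interval `[0, t₁]`. There the substitution `y = δ sin θ` turns `dt` into
`√2 dθ / √(2 + δ² + δ² sin² θ)`, so `∫₀^{t₁} h(y) dt` becomes an integral over `[−π/2, π/2]` of an
even integrand. For `h = 1` this gives `t₁ = T/2`, since `u = sin θ` rewrites the period integral
in the same form.
-/

open Real Set Topology intervalIntegral

theorem exists_first_zero_of_pos_of_nonpos {f : ℝ → ℝ} {a b : ℝ} (hab : a ≤ b)
    (hf : ContinuousOn f (Icc a b)) (ha : 0 < f a) (hb : f b ≤ 0) :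
    ∃ c ∈ Ioc a b, f c = 0 ∧ ∀ t ∈ Ico a c, 0 < f t := by
  set S := Icc a b ∩ f ⁻¹' Iic 0
  have hS : IsClosed S := hf.preimage_isClosed_of_isClosed isClosed_Icc isClosed_Iic
  have hbdd : BddBelow S := ⟨a, fun t ht ↦ ht.1.1⟩
  obtain ⟨⟨hac, hcb⟩, hc⟩ : sInf S ∈ S := hS.csInf_mem ⟨b, ⟨hab, le_rfl⟩, hb⟩ hbdd
  have hpos : ∀ t ∈ Ico a (sInf S), 0 < f t := fun t ht ↦ not_le.1 fun hft ↦
    (csInf_le hbdd ⟨⟨ht.1, ht.2.le.trans hcb⟩, hft⟩).not_gt ht.2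
  have hac' : a < sInf S := hac.lt_of_ne fun h ↦ (h ▸ hc).not_gt ha
  refine ⟨sInf S, ⟨hac', hcb⟩, le_antisymm hc (not_lt.1 fun hneg ↦ ?_), hpos⟩
  obtain ⟨t, ht, hft⟩ := intermediate_value_Ioo' hac'.le (hf.mono (Icc_subset_Icc_right hcb))
    ⟨hneg, ha⟩
  exact (hpos t ⟨ht.1.le, ht.2⟩).ne' hft

theorem strictMonoOn_Icc_of_hasDerivAt_pos {f f' : ℝ → ℝ} {a b : ℝ}
    (hf : ∀ t, HasDerivAt f (f' t) t) (hpos : ∀ t ∈ Ioo a b, 0 < f' t) :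
    StrictMonoOn f (Icc a b) :=
  strictMonoOn_of_hasDerivWithinAt_pos (convex_Icc a b)
    (fun t _ ↦ (hf t).continuousAt.continuousWithinAt)
    (fun t _ ↦ (hf t).hasDerivWithinAt) (by rwa [interior_Icc])

theorem integral_neg_eq_two_mul_integral_of_even {f : ℝ → ℝ} (hf : Continuous f)
    (heven : ∀ x, f (-x) = f x) (a : ℝ) :
    ∫ x in -a..a, f x = 2 * ∫ x in 0..a, f x := by
  have hleft : ∫ x in -a..0, f x = ∫ x in 0..a, f x := by
    simpa [heven] using (integral_comp_neg (a := 0) (b := a) f).symm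
  rw [← integral_add_adjacent_intervals (hf.intervalIntegrable _ _) (hf.intervalIntegrable _ _),
    hleft, two_mul]

theorem integral_comp_arcsin_div_mul {y y' : ℝ → ℝ} {a b δ : ℝ} (hab : a ≤ b) (hδ : 0 < δ)
    (hy : ContinuousOn y (Icc a b)) (hderiv : ∀ t ∈ Ioo a b, HasDerivAt y (y' t) t)
    (hlt : ∀ t ∈ Ioo a b, |y t| < δ) (hy' : ∀ t ∈ Ioo a b, 0 ≤ y' t) (G : ℝ → ℝ) :
    ∫ t in a..b, G (arcsin (y t / δ)) * (y' t / √(δ ^ 2 - y t ^ 2)) =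
      ∫ φ in arcsin (y a / δ)..arcsin (y b / δ), G φ := by
  have hθ : ∀ t ∈ Ioo a b,
      HasDerivAt (fun t ↦ arcsin (y t / δ)) (y' t / √(δ ^ 2 - y t ^ 2)) t := by
    intro t ht
    obtain ⟨hlo, hhi⟩ := abs_lt.1 (hlt t ht)
    have hsq : 0 < δ ^ 2 - y t ^ 2 := by nlinarith
    have hne₁ : y t / δ ≠ -1 := by rw [ne_eq, div_eq_iff hδ.ne']; linarith
    have hne₂ : y t / δ ≠ 1 := by rw [ne_eq, div_eq_iff hδ.ne']; linarith
    refine ((hasDerivAt_arcsin hne₁ hne₂).comp t ((hderiv t ht).div_const δ)).congr_deriv ?_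
    rw [show 1 - (y t / δ) ^ 2 = (δ ^ 2 - y t ^ 2) / δ ^ 2 by field_simp,
      sqrt_div' _ (sq_nonneg δ), sqrt_sq hδ.le]
    field_simp
  rw [← uIcc_of_le hab] at hy
  exact integral_comp_mul_deriv_of_deriv_nonneg (g := G)
    (continuous_arcsin.comp_continuousOn (hy.div_const δ))
    (by rwa [min_eq_left hab, max_eq_right hab])
    (by rw [min_eq_left hab, max_eq_right hab]
        exact fun t ht ↦ div_nonneg (hy' t ht) (sqrt_nonneg _))

theorem integral_div_sqrt_one_sub_sq_eq_integral_comp_sin (k : ℝ → ℝ) :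
    ∫ u in (0 : ℝ)..1, k u / √(1 - u ^ 2) = ∫ φ in 0..π / 2, k (sin φ) := by
  have h := integral_comp_arcsin_div_mul zero_le_one one_pos continuousOn_id
    (fun t _ ↦ hasDerivAt_id t) (fun t ht ↦ by rw [id, abs_lt]; exact ⟨by linarith [ht.1], ht.2⟩)
    (fun _ _ ↦ zero_le_one) (k ∘ sin)
  simp only [id, div_one, one_pow, arcsin_zero, arcsin_one, Function.comp_apply] at h
  rw [← h]
  refine integral_congr fun u hu ↦ ?_
  rw [uIcc_of_le zero_le_one] at hu
  simp only [sin_arcsin (by linarith [hu.1]) hu.2, mul_one_div]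

theorem integral_comp_eq_integral_comp_sin_of_deriv_eq_sqrt {y y' g : ℝ → ℝ} {a b δ : ℝ}
    (hab : a ≤ b) (hδ : 0 < δ) (hy : ContinuousOn y (Icc a b))
    (hderiv : ∀ t ∈ Ioo a b, HasDerivAt y (y' t) t) (ha : y a = -δ) (hb : y b = δ)
    (hlt : ∀ t ∈ Ioo a b, |y t| < δ) (hg : ∀ s, 0 < g s)
    (hspeed : ∀ t ∈ Ioo a b, y' t = √(g (y t) * (δ ^ 2 - y t ^ 2))) (h : ℝ → ℝ) :
    ∫ t in a..b, h (y t) = ∫ φ in -(π / 2)..π / 2, h (δ * sin φ) / √(g (δ * sin φ)) := by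
  have hsubst := integral_comp_arcsin_div_mul hab hδ hy hderiv hlt
    (fun t ht ↦ hspeed t ht ▸ sqrt_nonneg _) (fun φ ↦ h (δ * sin φ) / √(g (δ * sin φ)))
  rw [ha, hb, neg_div, div_self hδ.ne', arcsin_neg, arcsin_one] at hsubst
  rw [← hsubst]
  refine integral_congr_Ioo_of_le hab fun t ht ↦ ?_
  obtain ⟨hlo, hhi⟩ := abs_lt.1 (hlt t ht)
  have hsq : 0 < δ ^ 2 - y t ^ 2 := by nlinarith
  have hsin : δ * sin (arcsin (y t / δ)) = y t := by
    rw [sin_arcsin (by rw [le_div_iff₀ hδ]; linarith) (by rw [div_le_one hδ]; linarith)]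
    field_simp
  rw [hsin, hspeed t ht, sqrt_mul (hg _).le, mul_div_assoc, div_self (sqrt_pos.2 hsq).ne',
    mul_one, div_mul_cancel₀ _ (sqrt_pos.2 (hg _)).ne']

section Duffing

variable {y y' : ℝ → ℝ} {δ : ℝ} (hy : ∀ t, HasDerivAt y (y' t) t)
  (hy' : ∀ t, HasDerivAt y' (-(y t) - y t ^ 3) t)
include hy hy'

theorem duffing_energy_eq (t s : ℝ) :
    y' t ^ 2 + y t ^ 2 + y t ^ 4 / 2 = y' s ^ 2 + y s ^ 2 + y s ^ 4 / 2 := by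
  have hE : ∀ t, HasDerivAt (fun t ↦ y' t ^ 2 + y t ^ 2 + y t ^ 4 / 2) 0 t := fun t ↦ by
    refine (((((hy' t).pow 2).add ((hy t).pow 2)).add (((hy t).pow 4).div_const 2) :
      HasDerivAt (fun t ↦ y' t ^ 2 + y t ^ 2 + y t ^ 4 / 2) _ t)).congr_deriv ?_
    norm_num
    ring
  exact is_const_of_deriv_eq_zero (fun t ↦ (hE t).differentiableAt) (fun t ↦ (hE t).deriv) t s

theorem duffing_deriv_sq (h0 : y 0 = -δ) (h0' : y' 0 = 0) (t : ℝ) :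
    y' t ^ 2 = (2 + δ ^ 2 + y t ^ 2) / 2 * (δ ^ 2 - y t ^ 2) := by
  have h := duffing_energy_eq hy hy' t 0
  rw [h0, h0'] at h
  linear_combination h

theorem duffing_exists_half_orbit (hδ : 0 < δ) (h0 : y 0 = -δ) (h0' : y' 0 = 0) {T : ℝ}
    (hT : 0 < T) (hyT : y T = -δ) :
    ∃ t₁ > 0, y t₁ = δ ∧ ∀ t ∈ Ioo 0 t₁, |y t| < δ ∧ 0 < y' t := by
  -- `y'' > 0` near `0` makes `y' > 0` on `(0, ε]`; as `y ε > y T`, the mean value theorem yields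
  -- `y' c < 0` for some `c > ε`, and `t₁` is the first zero of `y'` after `ε`.
  obtain ⟨ε, hε, hεT, hy'ε⟩ : ∃ ε > 0, ε < T ∧ ∀ t ∈ Ioc 0 ε, 0 < y' t := by
    have hacc : ∀ᶠ t in 𝓝 0, 0 < -(y t) - y t ^ 3 :=
      continuousAt_const.eventually_lt ((hy 0).continuousAt.neg.sub ((hy 0).continuousAt.pow 3))
        (by rw [h0]; ring_nf; positivity)
    obtain ⟨u, ⟨hu, huT⟩, hsub⟩ := exists_Ico_subset_of_mem_nhds' hacc hT
    refine ⟨u / 2, by positivity, by linarith, fun t ht ↦ h0' ▸ ?_⟩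
    refine strictMonoOn_Icc_of_hasDerivAt_pos hy' (fun s hs ↦ hsub ⟨hs.1.le, by linarith [hs.2]⟩)
      (left_mem_Icc.2 (by positivity)) (Ioc_subset_Icc_self ht) ht.1
  have hyε : -δ < y ε := h0 ▸ strictMonoOn_Icc_of_hasDerivAt_pos hy
    (fun t ht ↦ hy'ε t (Ioo_subset_Ioc_self ht)) (left_mem_Icc.2 hε.le) (right_mem_Icc.2 hε.le) hε
  obtain ⟨c, hc, hy'c⟩ := exists_hasDerivAt_eq_slope y y' hεT
    (fun t _ ↦ (hy t).continuousAt.continuousWithinAt) (fun t _ ↦ hy t)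
  have hy'c_neg : y' c < 0 := by
    rw [hy'c]; exact div_neg_of_neg_of_pos (by linarith) (by linarith)
  obtain ⟨t₁, ht₁, hy't₁, hpos⟩ := exists_first_zero_of_pos_of_nonpos hc.1.le
    (fun t _ ↦ (hy' t).continuousAt.continuousWithinAt) (hy'ε ε ⟨hε, le_rfl⟩) hy'c_neg.le
  have hy'pos : ∀ t ∈ Ioo 0 t₁, 0 < y' t := fun t ht ↦
    (le_or_gt t ε).elim (fun h ↦ hy'ε t ⟨ht.1, h⟩) (fun h ↦ hpos t ⟨h.le, ht.2⟩)
  have hmono := strictMonoOn_Icc_of_hasDerivAt_pos hy hy'pos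
  have ht₁pos : 0 < t₁ := hε.trans ht₁.1
  have hlo : ∀ t ∈ Ioc 0 t₁, -δ < y t := fun t ht ↦
    h0 ▸ hmono (left_mem_Icc.2 ht₁pos.le) (Ioc_subset_Icc_self ht) ht.1
  have hyt₁ : y t₁ = δ := by
    have h := duffing_deriv_sq hy hy' h0 h0' t₁
    rw [hy't₁, eq_comm, zero_pow two_ne_zero, mul_eq_zero] at h
    have hB : (2 + δ ^ 2 + y t₁ ^ 2) / 2 ≠ 0 := by positivity
    have hsq : (δ - y t₁) * (δ + y t₁) = 0 := by linear_combination h.resolve_left hB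
    have := hlo t₁ ⟨ht₁pos, le_rfl⟩
    linarith [(mul_eq_zero.1 hsq).resolve_right (by linarith)]
  refine ⟨t₁, ht₁pos, hyt₁, fun t ht ↦ ⟨abs_lt.2 ⟨hlo t (Ioo_subset_Ioc_self ht), ?_⟩, hy'pos t ht⟩⟩
  exact hyt₁ ▸ hmono (Ioo_subset_Icc_self ht) (right_mem_Icc.2 ht₁pos.le) ht.2

theorem duffing_integral_comp_half_orbit (hδ : 0 < δ) (h0 : y 0 = -δ) (h0' : y' 0 = 0) {t₁ : ℝ}
    (ht₁ : 0 < t₁) (hyt₁ : y t₁ = δ) (horbit : ∀ t ∈ Ioo 0 t₁, |y t| < δ ∧ 0 < y' t)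
    {h : ℝ → ℝ} (hh : Continuous h) (heven : ∀ s, h (-s) = h s) :
    ∫ t in 0..t₁, h (y t) =
      2 * √2 * ∫ φ in 0..π / 2, h (δ * sin φ) / √(2 + δ ^ 2 + δ ^ 2 * sin φ ^ 2) := by
  have hspeed : ∀ t ∈ Ioo 0 t₁, y' t = √((2 + δ ^ 2 + y t ^ 2) / 2 * (δ ^ 2 - y t ^ 2)) :=
    fun t ht ↦ by rw [← duffing_deriv_sq hy hy' h0 h0', sqrt_sq (horbit t ht).2.le]
  have hcont : Continuous fun φ ↦ h (δ * sin φ) / √((2 + δ ^ 2 + (δ * sin φ) ^ 2) / 2) :=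
    (hh.comp (by fun_prop)).div (by fun_prop) fun φ ↦ by positivity
  rw [integral_comp_eq_integral_comp_sin_of_deriv_eq_sqrt ht₁.le hδ
    (fun t _ ↦ (hy t).continuousAt.continuousWithinAt) (fun t _ ↦ hy t) h0 hyt₁
    (fun t ht ↦ (horbit t ht).1) (g := fun s ↦ (2 + δ ^ 2 + s ^ 2) / 2) (fun s ↦ by positivity)
    hspeed h,
    integral_neg_eq_two_mul_integral_of_even hcont
      (fun φ ↦ by simp only [sin_neg, mul_neg, neg_sq, heven]),
    mul_assoc]
  congr 1
  rw [← intervalIntegral.integral_const_mul]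
  refine integral_congr fun φ _ ↦ ?_
  rw [sqrt_div' _ zero_le_two, mul_pow, div_div_eq_mul_div, mul_div_right_comm, mul_comm]

end Duffing

theorem burdina_integral_formula_general (δ γ : ℝ) (hδ : 0 < δ)
    (y y' : ℝ → ℝ)
    (hy : ∀ t, HasDerivAt y (y' t) t)
    (hy' : ∀ t, HasDerivAt y' (-(y t) - (y t)^3) t)
    (h0 : y 0 = -δ) (h0' : y' 0 = 0)
    (T : ℝ)
    (hT : T = 4 * Real.sqrt 2 *
      ∫ θ in (0:ℝ)..1, 1 / Real.sqrt ((2 + δ^2 + δ^2 * θ^2) * (1 - θ^2)))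
    (hper : ∀ t, y (t + T) = y t) :
    (∫ t in (0:ℝ)..(T/2), Real.sqrt (γ + (y t)^2)) =
    2 * Real.sqrt 2 *
      ∫ θ in (0:ℝ)..(Real.pi/2),
        Real.sqrt ((γ + δ^2 * (Real.sin θ)^2) / (2 + δ^2 + δ^2 * (Real.sin θ)^2)) := by
  have hTsin : T = 4 * √2 * ∫ φ in 0..π / 2, 1 / √(2 + δ ^ 2 + δ ^ 2 * sin φ ^ 2) := by
    rw [hT, ← integral_div_sqrt_one_sub_sq_eq_integral_comp_sin
      fun u ↦ 1 / √(2 + δ ^ 2 + δ ^ 2 * u ^ 2)]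
    refine congrArg _ (integral_congr fun u _ ↦ ?_)
    rw [sqrt_mul (by positivity), div_div]
  have hT0 : 0 < T := hTsin ▸ mul_pos (by positivity) (intervalIntegral_pos_of_pos_on
    ((continuous_const.div (by fun_prop) fun φ ↦ by positivity).intervalIntegrable _ _)
    (fun φ _ ↦ by positivity) (by positivity))
  obtain ⟨t₁, ht₁, hyt₁, horbit⟩ :=
    duffing_exists_half_orbit hy hy' hδ h0 h0' hT0 (by rw [← zero_add T, hper, h0])
  have ht₁T : t₁ = T / 2 := by
    have h := duffing_integral_comp_half_orbit hy hy' hδ h0 h0' ht₁ hyt₁ horbit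
      continuous_const (h := fun _ ↦ 1) fun _ ↦ rfl
    rw [intervalIntegral.integral_const, sub_zero, smul_eq_mul, mul_one] at h
    rw [h, hTsin]
    ring
  rw [← ht₁T, duffing_integral_comp_half_orbit hy hy' hδ h0 h0' ht₁ hyt₁ horbit
    (h := fun s ↦ √(γ + s ^ 2)) (by fun_prop) fun s ↦ by rw [neg_sq]]
  refine congrArg _ (integral_congr fun φ _ ↦ ?_)
  rw [mul_pow, sqrt_div' _ (by positivity)]

theorem burdina_integral_formula (δ γ : ℝ) (hδ : 0 < δ) (hγ : 0 < γ)
    (y y' : ℝ → ℝ)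
    (hy : ∀ t, HasDerivAt y (y' t) t)
    (hy' : ∀ t, HasDerivAt y' (-(y t) - (y t)^3) t)
    (h0 : y 0 = -δ) (h0' : y' 0 = 0)
    (T : ℝ)
    (hT : T = 4 * Real.sqrt 2 *
      ∫ θ in (0:ℝ)..1, 1 / Real.sqrt ((2 + δ^2 + δ^2 * θ^2) * (1 - θ^2)))
    (hper : ∀ t, y (t + T) = y t) :
    (∫ t in (0:ℝ)..(T/2), Real.sqrt (γ + (y t)^2)) =
    2 * Real.sqrt 2 *
      ∫ θ in (0:ℝ)..(Real.pi/2),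
        Real.sqrt ((γ + δ^2 * (Real.sin θ)^2) / (2 + δ^2 + δ^2 * (Real.sin θ)^2)) :=
  burdina_integral_formula_general δ γ hδ y y' hy hy' h0 h0' T hT hper
end

section
/- For every ω > 0: Ψ(0, ω) = π·ω and lim_{δ→∞} Ψ(δ, ω) = π·√(ω/2), where Ψ(δ, ω) := 2√(2ω) · ∫₀^{π/2} √((ω + δ²sin²θ)/(2 + δ² + δ²sin²θ)) dθ. -/
/-!
At `δ = 0` the integrand is the constant `√(ω / 2)`. As `δ → ∞` it converges to
`sin θ / √(1 + sin² θ)` and is bounded by `√(|ω| + 1)`, so by dominated convergence the integral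
tends to `∫₀^{π/2} sin θ / √(2 - cos² θ) dθ = [-arcsin (cos θ / √2)]₀^{π/2} = π / 4`.
-/

open Real Filter Topology intervalIntegral

lemma hasDerivAt_neg_arcsin_cos_div_sqrt_two (t : ℝ) :
    HasDerivAt (fun t => -arcsin (cos t / √2)) (sin t / √(1 + sin t ^ 2)) t := by
  have h2 : (0:ℝ) < √2 := by positivity
  have hx : |cos t / √2| < 1 := by
    rw [abs_div, abs_of_pos h2, div_lt_one h2]
    exact (abs_cos_le_one t).trans_lt (by rw [lt_sqrt zero_le_one]; norm_num)
  have hx' := abs_lt.1 hx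
  have hsub : 1 - (cos t / √2) ^ 2 = (1 + sin t ^ 2) / 2 := by
    rw [div_pow, sq_sqrt zero_le_two]; linarith [sin_sq_add_cos_sq t]
  refine ((hasDerivAt_arcsin hx'.1.ne' hx'.2.ne).comp t
    ((hasDerivAt_cos t).div_const √2)).neg.congr_deriv ?_
  rw [hsub, sqrt_div' _ zero_le_two]
  field_simp

lemma integral_sin_div_sqrt_one_add_sin_sq :
    ∫ θ in (0:ℝ)..π / 2, sin θ / √(1 + sin θ ^ 2) = π / 4 := by
  have hcont : Continuous fun θ => sin θ / √(1 + sin θ ^ 2) :=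
    continuous_sin.div (by fun_prop) fun θ => (sqrt_pos.2 (by positivity)).ne'
  rw [integral_eq_sub_of_hasDerivAt (fun t _ => hasDerivAt_neg_arcsin_cos_div_sqrt_two t)
    (hcont.intervalIntegrable _ _)]
  have harcsin : arcsin (√2)⁻¹ = π / 4 := by
    rw [← sqrt_div_self, ← sin_pi_div_four, arcsin_sin] <;> linarith [pi_pos]
  simp [harcsin]

lemma tendsto_add_mul_div_add_add_mul_atTop (a b s : ℝ) (hs : 1 + s ≠ 0) :
    Tendsto (fun x => (a + x * s) / (b + x + x * s)) atTop (𝓝 (s / (1 + s))) := by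
  have hinv := tendsto_inv_atTop_zero (𝕜 := ℝ)
  have hlim := ((hinv.const_mul a).add_const s).div
    (((hinv.const_mul b).add_const 1).add_const s) (by simpa using hs)
  simp only [mul_zero, zero_add] at hlim
  refine hlim.congr' ?_
  filter_upwards [eventually_gt_atTop 0] with x hx
  simp only [Pi.div_apply]
  field_simp

lemma sqrt_add_sq_mul_div_le (ω δ s : ℝ) :
    √((ω + δ ^ 2 * s ^ 2) / (2 + δ ^ 2 + δ ^ 2 * s ^ 2)) ≤ √(|ω| + 1) := by
  refine sqrt_le_sqrt ((div_le_iff₀ (by positivity)).2 ?_)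
  nlinarith [le_abs_self ω, abs_nonneg ω, sq_nonneg δ, mul_nonneg (sq_nonneg δ) (sq_nonneg s)]

lemma tendsto_integral_Psi_atTop (ω : ℝ) :
    Tendsto (fun δ : ℝ => ∫ θ in (0:ℝ)..π / 2,
      √((ω + δ ^ 2 * sin θ ^ 2) / (2 + δ ^ 2 + δ ^ 2 * sin θ ^ 2))) atTop (𝓝 (π / 4)) := by
  rw [← integral_sin_div_sqrt_one_add_sin_sq]
  refine tendsto_integral_filter_of_dominated_convergence (fun _ => √(|ω| + 1))
    (Eventually.of_forall fun δ => ?_) (Eventually.of_forall fun δ => ?_)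
    intervalIntegrable_const (Eventually.of_forall fun θ hθ => ?_)
  · exact (continuous_sqrt.comp ((by fun_prop : Continuous _).div (by fun_prop)
      fun θ => by positivity)).aestronglyMeasurable
  · exact Eventually.of_forall fun θ _ => by
      rw [norm_of_nonneg (sqrt_nonneg _)]; exact sqrt_add_sq_mul_div_le ω δ (sin θ)
  · rw [Set.uIoc_of_le (by positivity)] at hθ
    have hsin : 0 ≤ sin θ := sin_nonneg_of_nonneg_of_le_pi hθ.1.le (by linarith [pi_pos, hθ.2])
    have hlim := (continuous_sqrt.tendsto _).comp
      ((tendsto_add_mul_div_add_add_mul_atTop ω 2 (sin θ ^ 2) (by positivity)).comp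
        (tendsto_pow_atTop two_ne_zero))
    rwa [sqrt_div' _ (by positivity), sqrt_sq hsin] at hlim

lemma sqrt_two_mul_eq_two_mul_sqrt_div_two (ω : ℝ) : √(2 * ω) = 2 * √(ω / 2) := by
  rw [show 2 * ω = 2 ^ 2 * (ω / 2) by ring, sqrt_mul (by norm_num), sqrt_sq zero_le_two]

theorem Psi_values_and_limit (ω : ℝ) (hω : 0 < ω) :
    (2 * Real.sqrt (2 * ω) *
      ∫ θ in (0:ℝ)..(Real.pi/2),
        Real.sqrt ((ω + (0:ℝ)^2 * (Real.sin θ)^2) / (2 + (0:ℝ)^2 + (0:ℝ)^2 * (Real.sin θ)^2))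
      = Real.pi * ω) ∧
    Filter.Tendsto
      (fun δ : ℝ => 2 * Real.sqrt (2 * ω) *
        ∫ θ in (0:ℝ)..(Real.pi/2),
          Real.sqrt ((ω + δ^2 * (Real.sin θ)^2) / (2 + δ^2 + δ^2 * (Real.sin θ)^2)))
      Filter.atTop (nhds (Real.pi * Real.sqrt (ω / 2))) := by
  rw [sqrt_two_mul_eq_two_mul_sqrt_div_two]
  constructor
  · have hsq : √(ω / 2) ^ 2 = ω / 2 := sq_sqrt (by positivity)
    simp only [ne_eq, OfNat.ofNat_ne_zero, not_false_eq_true, zero_pow, zero_mul, add_zero,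
      integral_const, sub_zero, smul_eq_mul]
    linear_combination 2 * π * hsq
  · rw [show π * √(ω / 2) = 2 * (2 * √(ω / 2)) * (π / 4) by ring]
    exact (tendsto_integral_Psi_atTop ω).const_mul _
end
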